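/- Let σ be a Borel probability measure on [0,∞) with mean m := ∫ u dσ(u) ∈ (0,∞), define c(r) = (∫ |u − r| dσ(u) + r + m)/2, and for s ∈ (0,m) set φ(s) := min_{r>0} (c(r) − s)/r and ζ(s) := sup{r > 0 : (c(r) − s)/r = φ(s)}. Then for every s ∈ (0,m), φ(s) = 1 − ∫₀^s (1/ζ(u)) du. -/

import Mathlib

/-!
Each `r > 0` contributes the affine function `s ↦ (c r - s) / r` of slope `-1 / r`, and `φ` is
their lower envelope, so `-φ` is convex and the line of the minimizer `ζ s` touches it at `s`:
`1 / ζ` is a monotone family of subgradients of `-φ` on `(0, m)`. A convex function is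
differentiable with derivative its subgradient off the countable set where the subgradients jump,
which gives `φ a - φ s = ∫_a^s 1 / ζ`; letting `a → 0` uses `1 - a / m ≤ φ a < 1`.
-/

open MeasureTheory Set Filter Topology

theorem MonotoneOn.integrableOn_Ioc_of_forall_le {μ : Measure ℝ}
    [IsFiniteMeasureOnCompacts μ] {g : ℝ → ℝ} {a b C : ℝ} (hg : MonotoneOn g (Ioc a b))
    (hC : ∀ x ∈ Ioc a b, C ≤ g x) : IntegrableOn g (Ioc a b) μ := by
  have hext : MonotoneOn (Function.update g a C) (Icc a b) := by
    intro x hx y hy hxy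
    rcases eq_or_lt_of_le hx.1 with rfl | hax
    · rcases eq_or_lt_of_le hy.1 with rfl | hay
      · rfl
      · rw [Function.update_self, Function.update_of_ne hay.ne']
        exact hC y ⟨hay, hy.2⟩
    · have hay := hax.trans_le hxy
      rw [Function.update_of_ne hax.ne', Function.update_of_ne hay.ne']
      exact hg ⟨hax, hx.2⟩ ⟨hay, hy.2⟩ hxy
  exact ((hext.integrableOn_isCompact isCompact_Icc).mono_set Ioc_subset_Icc_self).congr_fun
    (fun x hx => Function.update_of_ne hx.1.ne' _ _) measurableSet_Ioc

def HasSubgradientsOn (f g : ℝ → ℝ) (S : Set ℝ) : Prop :=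
  ∀ x ∈ S, ∀ y ∈ S, f x + (y - x) * g x ≤ f y

namespace HasSubgradientsOn

variable {f g : ℝ → ℝ} {S T : Set ℝ}

theorem mono (h : HasSubgradientsOn f g S) (hT : T ⊆ S) : HasSubgradientsOn f g T :=
  fun x hx y hy => h x (hT hx) y (hT hy)

theorem monotoneOn (h : HasSubgradientsOn f g S) : MonotoneOn g S := by
  intro x hx y hy hxy
  have hxy' := h x hx y hy
  have hyx := h y hy x hx
  rcases hxy.eq_or_lt with rfl | hlt
  · rfl
  · nlinarith

theorem slope_mem_uIcc (h : HasSubgradientsOn f g S) {x y : ℝ} (hx : x ∈ S) (hy : y ∈ S)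
    (hne : x ≠ y) : slope f x y ∈ uIcc (g x) (g y) := by
  have hxy := h x hx y hy
  have hyx := h y hy x hx
  rw [slope_def_field]
  rcases hne.lt_or_gt with hlt | hlt
  · have hpos : 0 < y - x := sub_pos.2 hlt
    refine mem_uIcc.2 (Or.inl ⟨?_, ?_⟩)
    · rw [le_div_iff₀ hpos]; linarith
    · rw [div_le_iff₀ hpos]; linarith
  · have hneg : y - x < 0 := sub_neg.2 hlt
    refine mem_uIcc.2 (Or.inr ⟨?_, ?_⟩)
    · rw [le_div_iff_of_neg hneg]; linarith
    · rw [div_le_iff_of_neg hneg]; linarith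

theorem hasDerivAt (h : HasSubgradientsOn f g S) {x : ℝ} (hS : S ∈ 𝓝 x)
    (hg : ContinuousAt g x) : HasDerivAt f (g x) x := by
  rw [hasDerivAt_iff_tendsto_slope]
  have hgx : Tendsto g (𝓝[≠] x) (𝓝 (g x)) := hg.tendsto.mono_left nhdsWithin_le_nhds
  have hlower : Tendsto (fun y => min (g x) (g y)) (𝓝[≠] x) (𝓝 (g x)) := by
    simpa using (tendsto_const_nhds (x := g x)).min hgx
  have hupper : Tendsto (fun y => max (g x) (g y)) (𝓝[≠] x) (𝓝 (g x)) := by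
    simpa using (tendsto_const_nhds (x := g x)).max hgx
  have hslope : ∀ᶠ y in 𝓝[≠] x, slope f x y ∈ uIcc (g x) (g y) := by
    filter_upwards [nhdsWithin_le_nhds hS, self_mem_nhdsWithin] with y hy hyx
    exact h.slope_mem_uIcc (mem_of_mem_nhds hS) hy (Ne.symm hyx)
  exact tendsto_of_tendsto_of_tendsto_of_le_of_le' hlower hupper
    (hslope.mono fun y hy => hy.1) (hslope.mono fun y hy => hy.2)

theorem continuousOn_Icc {a b : ℝ} (h : HasSubgradientsOn f g (Icc a b)) :
    ContinuousOn f (Icc a b) := by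
  refine (LipschitzOnWith.of_dist_le' (K := max |g a| |g b|) fun x hx y hy => ?_).continuousOn
  rcases eq_or_ne x y with rfl | hne
  · simp
  have hab : a ≤ b := hx.1.trans hx.2
  have hmono := h.monotoneOn
  have hslope : slope f y x ∈ Icc (g a) (g b) :=
    uIcc_subset_Icc ⟨hmono (left_mem_Icc.2 hab) hy hy.1, hmono hy (right_mem_Icc.2 hab) hy.2⟩
      ⟨hmono (left_mem_Icc.2 hab) hx hx.1, hmono hx (right_mem_Icc.2 hab) hx.2⟩
      (h.slope_mem_uIcc hy hx hne.symm)
  have hdiff : f x - f y = (x - y) * slope f y x := by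
    rw [slope_def_field]; field_simp [sub_ne_zero.2 hne]
  rw [Real.dist_eq, Real.dist_eq, hdiff, abs_mul, mul_comm]
  exact mul_le_mul_of_nonneg_right (abs_le_max_abs_abs hslope.1 hslope.2) (abs_nonneg _)

theorem integral_eq_sub {a b : ℝ} (hab : a ≤ b) (h : HasSubgradientsOn f g (Icc a b)) :
    ∫ x in a..b, g x = f b - f a := by
  have hmono := h.monotoneOn
  refine integral_eq_of_hasDerivAt_off_countable_of_le f g hab
    hmono.countable_not_continuousWithinAt h.continuousOn_Icc (fun x hx => ?_)
    (MonotoneOn.intervalIntegrable (by rwa [uIcc_of_le hab]))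
  have hIcc : Icc a b ∈ 𝓝 x := Icc_mem_nhds hx.1.1 hx.1.2
  refine h.hasDerivAt hIcc (ContinuousWithinAt.continuousAt ?_ hIcc)
  by_contra hcont
  exact hx.2 ⟨Ioo_subset_Icc_self hx.1, hcont⟩

theorem integral_eq_sub_of_tendsto {a b C L : ℝ} (hab : a < b)
    (h : HasSubgradientsOn f g (Ioc a b)) (hC : ∀ x ∈ Ioc a b, C ≤ g x)
    (hf : Tendsto f (𝓝[>] a) (𝓝 L)) : ∫ x in a..b, g x = f b - L := by
  have hint : IntegrableOn g (uIcc a b) := by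
    rw [uIcc_of_le hab.le, integrableOn_Icc_iff_integrableOn_Ioc]
    exact h.monotoneOn.integrableOn_Ioc_of_forall_le hC
  have hprimitive : Tendsto (fun x => ∫ t in x..b, g t) (𝓝[>] a) (𝓝 (∫ t in a..b, g t)) :=
    (intervalIntegral.continuousOn_primitive_interval_left hint a left_mem_uIcc).tendsto.mono_left
      (nhdsWithin_le_of_mem (by simpa [uIcc_of_le hab.le] using Icc_mem_nhdsGT hab))
  have hftc : ∀ x ∈ Ioo a b, f b - ∫ t in x..b, g t = f x := fun x hx => by
    rw [(h.mono fun y hy => ⟨hx.1.trans_le hy.1, hy.2⟩).integral_eq_sub hx.2.le]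
    ring
  have hf' : Tendsto f (𝓝[>] a) (𝓝 (f b - ∫ t in a..b, g t)) :=
    (tendsto_const_nhds.sub hprimitive).congr' (eventually_of_mem (Ioo_mem_nhdsGT hab) hftc)
  linarith [tendsto_nhds_unique hf hf']

end HasSubgradientsOn

noncomputable def potential (σ : Measure ℝ) (r : ℝ) : ℝ :=
  ((∫ u, |u - r| ∂σ) + r + ∫ u, u ∂σ) / 2

section Potential

variable {σ : Measure ℝ} [IsProbabilityMeasure σ]

theorem integral_sub_const_of_integrable (hint : Integrable (fun u : ℝ => u) σ) (r : ℝ) :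
    ∫ u, (u - r) ∂σ = ∫ u, u ∂σ - r := by
  rw [integral_sub hint (integrable_const r)]
  simp

theorem max_le_potential (hint : Integrable (fun u : ℝ => u) σ) (r : ℝ) :
    max (∫ u, u ∂σ) r ≤ potential σ r := by
  have habs := abs_integral_le_integral_abs (μ := σ) (f := fun u => u - r)
  rw [integral_sub_const_of_integrable hint, abs_le] at habs
  unfold potential
  exact max_le (by linarith) (by linarith)

theorem lipschitzWith_one_potential (hint : Integrable (fun u : ℝ => u) σ) :
    LipschitzWith 1 (potential σ) := by
  refine LipschitzWith.of_dist_le_mul fun r₁ r₂ => ?_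
  have hsub : ∀ r, Integrable (fun u : ℝ => u - r) σ := fun r => hint.sub (integrable_const r)
  have hbound : ∀ u : ℝ, ‖|u - r₁| - |u - r₂|‖ ≤ |r₁ - r₂| := fun u => by
    rw [Real.norm_eq_abs, abs_sub_comm r₁]
    simpa using abs_abs_sub_abs_le_abs_sub (u - r₁) (u - r₂)
  have hdiff : |∫ u, |u - r₁| ∂σ - ∫ u, |u - r₂| ∂σ| ≤ |r₁ - r₂| := by
    rw [← integral_sub (hsub r₁).abs (hsub r₂).abs]
    simpa using norm_integral_le_of_norm_le_const (μ := σ) (Eventually.of_forall hbound)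
  have hsplit : potential σ r₁ - potential σ r₂
      = ((∫ u, |u - r₁| ∂σ - ∫ u, |u - r₂| ∂σ) + (r₁ - r₂)) / 2 := by
    unfold potential; ring
  rw [Real.dist_eq, Real.dist_eq, NNReal.coe_one, one_mul, hsplit, abs_div, abs_two]
  linarith [abs_add_le (∫ u, |u - r₁| ∂σ - ∫ u, |u - r₂| ∂σ) (r₁ - r₂)]

theorem tendsto_potential_sub_self (hint : Integrable (fun u : ℝ => u) σ) :
    Tendsto (fun r => potential σ r - r) atTop (𝓝 0) := by
  have hsub : ∀ r, Integrable (fun u : ℝ => u - r) σ := fun r => hint.sub (integrable_const r)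
  have hpos_part : ∀ r, potential σ r - r = (∫ u, (|u - r| + (u - r)) ∂σ) / 2 := fun r => by
    rw [integral_add (hsub r).abs (hsub r), integral_sub_const_of_integrable hint, potential]
    ring
  have hbound : ∀ᶠ r in atTop, ∀ᵐ u ∂σ, ‖|u - r| + (u - r)‖ ≤ 2 * |u| := by
    filter_upwards [eventually_ge_atTop 0] with r hr
    refine Eventually.of_forall fun u => ?_
    rw [Real.norm_eq_abs, abs_of_nonneg (by linarith [neg_abs_le (u - r)])]
    rcases le_total 0 (u - r) with h | h
    · rw [abs_of_nonneg h]; linarith [le_abs_self u]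
    · rw [abs_of_nonpos h]; linarith [abs_nonneg u]
  have hlim : ∀ᵐ u ∂σ, Tendsto (fun r => |u - r| + (u - r)) atTop (𝓝 0) := by
    refine Eventually.of_forall fun u => tendsto_const_nhds.congr' ?_
    filter_upwards [eventually_ge_atTop u] with r hr
    rw [abs_of_nonpos (by linarith)]
    ring
  have hint_lim := tendsto_integral_filter_of_dominated_convergence (fun u => 2 * |u|)
    (Eventually.of_forall fun r => ((hsub r).abs.add (hsub r)).aestronglyMeasurable)
    hbound (hint.abs.const_mul 2) hlim
  simpa [hpos_part] using hint_lim.div_const 2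

end Potential

section MinimalRatio

variable {c : ℝ → ℝ} {s p : ℝ}

theorem IsLeast.lt_one_of_tendsto_sub_self
    (hp : IsLeast ((fun r => (c r - s) / r) '' Ioi 0) p)
    (hc : Tendsto (fun r => c r - r) atTop (𝓝 0)) (hs : 0 < s) : p < 1 := by
  obtain ⟨r, hr, hlt⟩ := ((eventually_gt_atTop 0).and (hc.eventually (gt_mem_nhds hs))).exists
  exact (hp.2 ⟨r, hr, rfl⟩).trans_lt ((div_lt_one hr).2 (by linarith))

theorem one_sub_div_le_ratio {m r : ℝ} (hm : 0 < m) (hr : 0 < r) (hs : s ∈ Icc 0 m)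
    (hc : max m r ≤ c r) : 1 - s / m ≤ (c r - s) / r := by
  have hsm : s / m * m = s := div_mul_cancel₀ s hm.ne'
  rw [le_div_iff₀ hr]
  rcases le_total r m with hrm | hmr
  · have hcoef : 0 ≤ 1 - s / m := sub_nonneg.2 ((div_le_one hm).2 hs.2)
    nlinarith [mul_le_mul_of_nonneg_left hrm hcoef, le_max_left m r]
  · have hcoef : 0 ≤ s / m := div_nonneg hs.1 hm.le
    nlinarith [mul_le_mul_of_nonneg_left hmr hcoef, le_max_right m r]

theorem sSup_minimizers_mem (hcont : Continuous c) (hcr : ∀ r, r ≤ c r) (hp1 : p < 1)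
    (hp : IsLeast ((fun r => (c r - s) / r) '' Ioi 0) p) :
    sSup {r | 0 < r ∧ (c r - s) / r = p} ∈ {r | 0 < r ∧ (c r - s) / r = p} := by
  set S := {r | 0 < r ∧ (c r - s) / r = p}
  obtain ⟨r₀, hr₀, hr₀p⟩ := hp.1
  have hr₀S : r₀ ∈ S := ⟨hr₀, hr₀p⟩
  have hbdd : BddAbove S := by
    refine ⟨s / (1 - p), fun r hrS => ?_⟩
    obtain ⟨hr, hrp⟩ := hrS
    rw [div_eq_iff hr.ne'] at hrp
    rw [le_div_iff₀ (sub_pos.2 hp1)]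
    linarith [hcr r]
  have hpos : 0 < sSup S := lt_of_lt_of_le hr₀ (le_csSup hbdd hr₀S)
  have hline : sSup S ∈ {r | c r - s = p * r} :=
    closure_minimal (fun r (hr : r ∈ S) => (div_eq_iff hr.1.ne').1 hr.2)
      (isClosed_eq (hcont.sub continuous_const) (continuous_const.mul continuous_id))
      (csSup_mem_closure ⟨r₀, hr₀S⟩ hbdd)
  exact ⟨hpos, (div_eq_iff hpos.ne').2 hline⟩

theorem hasSubgradientsOn_of_isLeast {I : Set ℝ} {φ ζ : ℝ → ℝ}
    (hφ : ∀ s ∈ I, IsLeast ((fun r => (c r - s) / r) '' Ioi 0) (φ s))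
    (hζ : ∀ s ∈ I, 0 < ζ s ∧ (c (ζ s) - s) / ζ s = φ s) :
    HasSubgradientsOn (fun s => -φ s) (fun s => 1 / ζ s) I := by
  intro s hs t ht
  obtain ⟨hpos, hmin⟩ := hζ s hs
  have hle : φ t ≤ (c (ζ s) - t) / ζ s := (hφ t ht).2 ⟨ζ s, hpos, rfl⟩
  have htangent : (c (ζ s) - t) / ζ s = φ s - (t - s) * (1 / ζ s) := by
    rw [← hmin]; field_simp; ring
  linarith

end MinimalRatio

theorem tangent_gradient_integral_formula_general (σ : Measure ℝ) [IsProbabilityMeasure σ]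
    (hint : Integrable (fun u : ℝ => u) σ)
    (m : ℝ) (hm : m = ∫ u, u ∂σ) (hmpos : 0 < m)
    (c : ℝ → ℝ) (hc : ∀ r, c r = ((∫ u, |u - r| ∂σ) + r + m) / 2)
    (φ ζ : ℝ → ℝ)
    (hφ : ∀ s ∈ Set.Ioo 0 m,
      IsLeast ((fun r => (c r - s) / r) '' Set.Ioi 0) (φ s))
    (hζ : ∀ s ∈ Set.Ioo 0 m,
      ζ s = sSup {r : ℝ | 0 < r ∧ (c r - s) / r = φ s}) :
    ∀ s ∈ Set.Ioo 0 m, φ s = 1 - ∫ u in (0 : ℝ)..s, 1 / ζ u := by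
  obtain rfl : c = potential σ := funext fun r => by rw [hc, hm]; rfl
  have hmax : ∀ r, max m r ≤ potential σ r := hm ▸ max_le_potential hint
  have hφ_lt_one : ∀ s ∈ Ioo 0 m, φ s < 1 := fun s hs =>
    (hφ s hs).lt_one_of_tendsto_sub_self (tendsto_potential_sub_self hint) hs.1
  have hζ_min : ∀ s ∈ Ioo 0 m, 0 < ζ s ∧ (potential σ (ζ s) - s) / ζ s = φ s :=
    fun s hs => hζ s hs ▸ sSup_minimizers_mem (lipschitzWith_one_potential hint).continuous
      (fun r => (le_max_right m r).trans (hmax r)) (hφ_lt_one s hs) (hφ s hs)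
  have hsub := hasSubgradientsOn_of_isLeast hφ hζ_min
  have hφ_ge : ∀ a ∈ Ioo 0 m, 1 - a / m ≤ φ a := fun a ha => by
    obtain ⟨r, hr, hra⟩ := (hφ a ha).1
    exact hra ▸ one_sub_div_le_ratio hmpos hr ⟨ha.1.le, ha.2.le⟩ (hmax r)
  intro s hs
  have hφ_lim : Tendsto φ (𝓝[>] 0) (𝓝 1) := by
    have hlower : Tendsto (fun a => 1 - a / m) (𝓝[>] 0) (𝓝 1) := by
      have hcont : Tendsto (fun a : ℝ => 1 - a / m) (𝓝 0) (𝓝 (1 - 0 / m)) :=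
        tendsto_const_nhds.sub (tendsto_id.div_const m)
      simpa using hcont.mono_left nhdsWithin_le_nhds
    refine tendsto_of_tendsto_of_tendsto_of_le_of_le' hlower tendsto_const_nhds ?_ ?_
    · filter_upwards [Ioo_mem_nhdsGT hmpos] with a ha using hφ_ge a ha
    · filter_upwards [Ioo_mem_nhdsGT hmpos] with a ha using (hφ_lt_one a ha).le
  have hftc := (hsub.mono (Ioc_subset_Ioo_right hs.2)).integral_eq_sub_of_tendsto hs.1 (C := 0)
    (fun u hu => (one_div_pos.2 (hζ_min u ⟨hu.1, hu.2.trans_lt hs.2⟩).1).le) hφ_lim.neg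
  linarith

/-- Lemma 5.4: with `c` the potential function of a probability measure `σ` on
`[0,∞)` with mean `m ∈ (0,∞)`, `φ(s) = min_{r>0} (c(r) − s)/r` and `ζ(s)` the
largest minimizer, one has `φ(s) = 1 − ∫₀^s du/ζ(u)` for every `s ∈ (0,m)`. -/
theorem tangent_gradient_integral_formula (σ : Measure ℝ) [IsProbabilityMeasure σ]
    (hsupp : σ (Set.Iio 0) = 0)
    (hint : Integrable (fun u : ℝ => u) σ)
    (m : ℝ) (hm : m = ∫ u, u ∂σ) (hmpos : 0 < m)
    (c : ℝ → ℝ) (hc : ∀ r, c r = ((∫ u, |u - r| ∂σ) + r + m) / 2)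
    (φ ζ : ℝ → ℝ)
    (hφ : ∀ s ∈ Set.Ioo 0 m,
      IsLeast ((fun r => (c r - s) / r) '' Set.Ioi 0) (φ s))
    (hζ : ∀ s ∈ Set.Ioo 0 m,
      ζ s = sSup {r : ℝ | 0 < r ∧ (c r - s) / r = φ s}) :
    ∀ s ∈ Set.Ioo 0 m, φ s = 1 - ∫ u in (0 : ℝ)..s, 1 / ζ u :=
  tangent_gradient_integral_formula_general σ hint m hm hmpos c hc φ ζ hφ hζ
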